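/- arXiv:2409.03979 — 6 statements merged into one kernel-verified Lean document; each statement's English description precedes it below -/
import Mathlib

section
/- Let F : ℝ → ℝ satisfy the second-order Pareto tail condition with parameters (α, ρ, c, d). Then the second-order logarithmic expansion holds uniformly in the tail: t^ρ · sup_{y ≥ t} | log((1 − F(y)) / (1 − F(t))) + α·log(y/t) − d·(y^(−ρ) − t^(−ρ)) | → 0 as t → ∞ (the supremum being finite for all sufficiently large t). -/
open Filter MeasureTheory Real Set

/-- Second-order Pareto tail condition with parameters `(α, ρ, c, d)`. -/
def ParetoTail (F : ℝ → ℝ) (α ρ c d : ℝ) : Prop :=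
  0 < α ∧ 0 < ρ ∧ 0 < c ∧
  ∃ y₀ : ℝ, 0 < y₀ ∧ ∃ e : ℝ → ℝ,
    Tendsto (fun y : ℝ => y ^ ρ * e y) atTop (nhds 0) ∧
    ∀ y : ℝ, y₀ ≤ y → 1 - F y = c * y ^ (-α) * (1 + d * y ^ (-ρ) + e y)

/-- Under the second-order Pareto tail condition, the second-order logarithmic expansion
holds uniformly in the tail: the supremum over `y ≥ t` of
`|log((1 - F y)/(1 - F t)) + α log(y/t) - d (y^(-ρ) - t^(-ρ))|` is finite for all
sufficiently large `t`, and `t^ρ` times this supremum tends to `0` as `t → ∞`. -/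
theorem statement1 (F : ℝ → ℝ) (α ρ c d : ℝ) (hF : ParetoTail F α ρ c d) :
    (∀ᶠ t : ℝ in atTop, BddAbove
      ((fun y : ℝ => |Real.log ((1 - F y) / (1 - F t)) + α * Real.log (y / t)
        - d * (y ^ (-ρ) - t ^ (-ρ))|) '' Set.Ici t)) ∧
    Tendsto (fun t : ℝ => t ^ ρ *
      ⨆ y ∈ Set.Ici t, |Real.log ((1 - F y) / (1 - F t)) + α * Real.log (y / t)
        - d * (y ^ (-ρ) - t ^ (-ρ))|) atTop (nhds 0) := by
  obtain ⟨hα, hρ, hc, y₀, hy₀, e, he, hFeq⟩ := hF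
  obtain ⟨u, hu⟩ : ∃ u : ℝ → ℝ, ∀ y, u y = d * y ^ (-ρ) + e y := ⟨_, fun _ => rfl⟩
  obtain ⟨g, hg⟩ : ∃ g : ℝ → ℝ, ∀ y, g y = Real.log (1 + u y) - d * y ^ (-ρ) := ⟨_, fun _ => rfl⟩
  have hneg : Tendsto (fun y : ℝ => y ^ (-ρ)) atTop (nhds 0) := tendsto_rpow_neg_atTop hρ
  have hcancel : ∀ y : ℝ, 0 < y → y ^ ρ * y ^ (-ρ) = 1 := by
    intro y hy
    rw [← Real.rpow_add hy, add_neg_cancel, Real.rpow_zero]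
  -- y^ρ * u y → d
  have hρu : Tendsto (fun y => y ^ ρ * u y) atTop (nhds d) := by
    have heq : ∀ᶠ y : ℝ in atTop, d + y ^ ρ * e y = y ^ ρ * u y := by
      filter_upwards [eventually_gt_atTop 0] with y hy
      have h1 := hcancel y hy
      calc d + y ^ ρ * e y = d * (y ^ ρ * y ^ (-ρ)) + y ^ ρ * e y := by rw [h1, mul_one]
        _ = y ^ ρ * u y := by simp only [hu]; ring
    exact Tendsto.congr' heq (by simpa using tendsto_const_nhds.add he)
  -- u y → 0
  have hu0 : Tendsto u atTop (nhds 0) := by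
    have heq : ∀ᶠ y : ℝ in atTop, (y ^ ρ * u y) * y ^ (-ρ) = u y := by
      filter_upwards [eventually_gt_atTop 0] with y hy
      have h1 := hcancel y hy
      calc (y ^ ρ * u y) * y ^ (-ρ) = u y * (y ^ ρ * y ^ (-ρ)) := by ring
        _ = u y := by rw [h1, mul_one]
    exact Tendsto.congr' heq (by simpa using hρu.mul hneg)
  have husmall : ∀ᶠ y : ℝ in atTop, |u y| < 1 / 2 := by
    have : Tendsto (fun y => |u y|) atTop (nhds 0) := by simpa using hu0.abs
    exact this.eventually_lt_const (by norm_num)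
  -- y^ρ * g y → 0
  have hB : Tendsto (fun y => y ^ ρ * g y) atTop (nhds 0) := by
    have hsq : Tendsto (fun y => y ^ ρ * (Real.log (1 + u y) - u y)) atTop (nhds 0) := by
      apply squeeze_zero_norm' (a := fun y => 2 * (|y ^ ρ * u y| * |u y|))
      · filter_upwards [husmall, eventually_gt_atTop 0] with y hy hy0
        have h1 : |(-u y)| < 1 := by rw [abs_neg]; linarith [hy]
        have h2 := Real.abs_log_sub_add_sum_range_le h1 1
        simp only [Finset.sum_range_one, pow_one, Nat.cast_zero, zero_add, div_one,
          sub_neg_eq_add, abs_neg] at h2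
        -- h2 : |(-u y) + Real.log (1 + u y)| ≤ |u y| ^ 2 / (1 - |u y|)
        have h3 : |u y| ^ 2 / (1 - |u y|) ≤ 2 * |u y| ^ 2 := by
          rw [div_le_iff₀ (by linarith [abs_nonneg (u y)])]
          nlinarith [abs_nonneg (u y), sq_nonneg (u y)]
        have h4 : |Real.log (1 + u y) - u y| ≤ 2 * |u y| ^ 2 := by
          have : Real.log (1 + u y) - u y = -u y + Real.log (1 + u y) := by ring
          rw [this]; exact h2.trans h3
        have hyρ : (0 : ℝ) ≤ y ^ ρ := (Real.rpow_pos_of_pos hy0 ρ).le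
        rw [Real.norm_eq_abs, abs_mul, abs_of_nonneg hyρ]
        calc y ^ ρ * |Real.log (1 + u y) - u y| ≤ y ^ ρ * (2 * |u y| ^ 2) := by
              exact mul_le_mul_of_nonneg_left h4 hyρ
          _ = 2 * (|y ^ ρ * u y| * |u y|) := by
              rw [abs_mul, abs_of_nonneg hyρ]; ring
      · have : Tendsto (fun y => |y ^ ρ * u y| * |u y|) atTop (nhds (|d| * |0|)) :=
          hρu.abs.mul hu0.abs
        simpa using this.const_mul 2
    have heq : ∀ᶠ y : ℝ in atTop,
        y ^ ρ * (Real.log (1 + u y) - u y) + y ^ ρ * e y = y ^ ρ * g y := by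
      filter_upwards with y
      have : d * y ^ (-ρ) = u y - e y := by simp only [hu]; ring
      simp only [hg, this]; ring
    exact Tendsto.congr' heq (by simpa using hsq.add he)
  -- positivity and log formula, eventually
  have hpos : ∀ᶠ y : ℝ in atTop, 0 < 1 + u y := by
    filter_upwards [husmall] with y hy
    have h2 : -(1 / 2 : ℝ) < u y ∧ u y < 1 / 2 := abs_lt.mp hy
    linarith [h2.1, h2.2]
  have hFy : ∀ᶠ y : ℝ in atTop, 0 < 1 - F y ∧
      Real.log (1 - F y) = Real.log c - α * Real.log y + Real.log (1 + u y) := by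
    filter_upwards [eventually_ge_atTop y₀, eventually_gt_atTop 0, hpos] with y h1 h2 h3
    have hFu : 1 - F y = c * y ^ (-α) * (1 + u y) := by
      rw [hFeq y h1]; simp only [hu]; ring
    have hpow : (0 : ℝ) < y ^ (-α) := Real.rpow_pos_of_pos h2 _
    have hposF : 0 < 1 - F y := by rw [hFu]; positivity
    refine ⟨hposF, ?_⟩
    rw [hFu, Real.log_mul (by positivity) (ne_of_gt h3),
      Real.log_mul (ne_of_gt hc) (ne_of_gt hpow), Real.log_rpow h2]
    ring
  -- key uniform bound
  have key : ∀ ε : ℝ, 0 < ε → ∀ᶠ t : ℝ in atTop, ∀ y ∈ Set.Ici t,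
      |Real.log ((1 - F y) / (1 - F t)) + α * Real.log (y / t)
        - d * (y ^ (-ρ) - t ^ (-ρ))| ≤ ε * t ^ (-ρ) := by
    intro ε hε
    have hBsmall : ∀ᶠ y : ℝ in atTop, |y ^ ρ * g y| < ε / 2 := by
      have : Tendsto (fun y => |y ^ ρ * g y|) atTop (nhds 0) := by simpa using hB.abs
      exact this.eventually_lt_const (half_pos hε)
    obtain ⟨T, hT⟩ := eventually_atTop.mp
      ((hFy.and (hBsmall.and (eventually_gt_atTop 0))))
    filter_upwards [eventually_ge_atTop T] with t htT y hy
    have hyt : t ≤ y := hy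
    obtain ⟨⟨hFt, hlogt⟩, hgt, ht0⟩ := hT t htT
    obtain ⟨⟨hFy', hlogy⟩, hgy, hy0⟩ := hT y (le_trans htT hyt)
    -- |g z| ≤ (ε/2) * z^(-ρ) for z = t, y
    have hbound : ∀ z : ℝ, 0 < z → |z ^ ρ * g z| < ε / 2 → |g z| ≤ ε / 2 * z ^ (-ρ) := by
      intro z hz hzb
      have hzρ : (0 : ℝ) < z ^ ρ := Real.rpow_pos_of_pos hz ρ
      have h1 : z ^ ρ * |g z| < ε / 2 := by
        rwa [abs_mul, abs_of_nonneg hzρ.le] at hzb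
      have h2 : |g z| ≤ ε / 2 / z ^ ρ := by
        rw [le_div_iff₀ hzρ]; nlinarith
      rwa [div_eq_mul_inv, ← Real.rpow_neg hz.le] at h2
    have hbt := hbound t ht0 hgt
    have hby := hbound y hy0 hgy
    -- the expression equals g y - g t
    have hexpr : Real.log ((1 - F y) / (1 - F t)) + α * Real.log (y / t)
        - d * (y ^ (-ρ) - t ^ (-ρ)) = g y - g t := by
      rw [Real.log_div (ne_of_gt hFy') (ne_of_gt hFt),
        Real.log_div (ne_of_gt hy0) (ne_of_gt ht0), hlogy, hlogt]
      simp only [hg]; ring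
    rw [hexpr]
    have hmono : y ^ (-ρ) ≤ t ^ (-ρ) :=
      Real.rpow_le_rpow_of_nonpos ht0 hyt (neg_nonpos.mpr hρ.le)
    calc |g y - g t| ≤ |g y| + |g t| := abs_sub _ _
      _ ≤ ε / 2 * y ^ (-ρ) + ε / 2 * t ^ (-ρ) := add_le_add hby hbt
      _ ≤ ε * t ^ (-ρ) := by nlinarith [Real.rpow_pos_of_pos ht0 (-ρ)]
  constructor
  · filter_upwards [key 1 one_pos] with t ht
    refine ⟨1 * t ^ (-ρ), ?_⟩
    rintro _ ⟨y, hy, rfl⟩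
    exact ht y hy
  · rw [NormedAddCommGroup.tendsto_nhds_zero]
    intro ε hε
    filter_upwards [key (ε / 2) (half_pos hε), eventually_gt_atTop 0] with t ht ht0
    have htρ : (0 : ℝ) < t ^ ρ := Real.rpow_pos_of_pos ht0 ρ
    have hSnn : 0 ≤ ⨆ y ∈ Set.Ici t, |Real.log ((1 - F y) / (1 - F t)) + α * Real.log (y / t)
        - d * (y ^ (-ρ) - t ^ (-ρ))| :=
      Real.iSup_nonneg fun y => Real.iSup_nonneg fun _ => abs_nonneg _
    have hSle : (⨆ y ∈ Set.Ici t, |Real.log ((1 - F y) / (1 - F t)) + α * Real.log (y / t)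
        - d * (y ^ (-ρ) - t ^ (-ρ))|) ≤ ε / 2 * t ^ (-ρ) := by
      have hnn : (0 : ℝ) ≤ ε / 2 * t ^ (-ρ) := by positivity
      exact Real.iSup_le (fun y => Real.iSup_le (fun hy => ht y hy) hnn) hnn
    have hfin : t ^ ρ * (ε / 2 * t ^ (-ρ)) = ε / 2 := by
      have h1 := hcancel t ht0
      calc t ^ ρ * (ε / 2 * t ^ (-ρ)) = ε / 2 * (t ^ ρ * t ^ (-ρ)) := by ring
        _ = ε / 2 := by rw [h1, mul_one]
    rw [Real.norm_eq_abs, abs_of_nonneg (by positivity)]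
    calc t ^ ρ * _ ≤ t ^ ρ * (ε / 2 * t ^ (-ρ)) := by
          exact mul_le_mul_of_nonneg_left hSle htρ.le
      _ = ε / 2 := hfin
      _ < ε := half_lt_self hε
end

section
/- Let F : ℝ → ℝ be nondecreasing and right-continuous and satisfy the second-order Pareto tail condition with parameters (α, ρ, c, d), and define the generalized inverse Q(q) = inf{ y ∈ ℝ : F(y) ≥ q } for q ∈ (0, 1). Then (1 − q)^(1/α) · Q(q) → c^(1/α) as q → 1⁻; in particular Q(q) is asymptotically equivalent to (c/(1 − q))^(1/α). -/
open Filter MeasureTheory Real Set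

/-- First-order extreme quantile asymptotics: if `F` is nondecreasing, right-continuous and
satisfies the second-order Pareto tail condition, and `Q q = inf {y | F y ≥ q}`, then
`(1 - q)^(1/α) * Q q → c^(1/α)` as `q → 1⁻`; in particular `Q q` is asymptotically
equivalent to `(c/(1 - q))^(1/α)`. -/
theorem statement8 (F : ℝ → ℝ) (α ρ c d : ℝ) (hF : ParetoTail F α ρ c d)
    (hmono : Monotone F) (hrc : ∀ x : ℝ, ContinuousWithinAt F (Set.Ici x) x) :
    Tendsto (fun q : ℝ => (1 - q) ^ (1 / α) * sInf {y : ℝ | q ≤ F y})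
      (nhdsWithin 1 (Set.Iio 1)) (nhds (c ^ (1 / α))) := by
  obtain ⟨hα, hρ, hc, y₀, hy₀, e, he, heq⟩ := hF
  set Q : ℝ → ℝ := fun q => sInf {y : ℝ | q ≤ F y} with hQdef
  -- e tends to 0
  have he0 : Tendsto e atTop (nhds 0) := by
    have h1 : Tendsto (fun y : ℝ => y ^ (-ρ) * (y ^ ρ * e y)) atTop (nhds 0) := by
      simpa using (tendsto_rpow_neg_atTop hρ).mul he
    refine h1.congr' ?_
    filter_upwards [eventually_gt_atTop (0 : ℝ)] with y hy
    rw [← mul_assoc, ← Real.rpow_add hy]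
    simp
  have htail : Tendsto (fun y : ℝ => d * y ^ (-ρ) + e y) atTop (nhds 0) := by
    simpa using ((tendsto_rpow_neg_atTop hρ).const_mul d).add he0
  -- key eventual bounds
  have key : ∀ ε' : ℝ, 0 < ε' → ε' < 1 →
      ∀ᶠ q in nhdsWithin (1 : ℝ) (Iio 1),
        (1 - ε') * c ≤ (1 - q) * (Q q) ^ α ∧ (1 - q) * (Q q) ^ α ≤ (1 + ε') * c ∧
          1 ≤ Q q := by
    intro ε' hε'0 hε'1
    have habs : ∀ᶠ y in atTop, |d * y ^ (-ρ) + e y| < ε' := by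
      have := Metric.tendsto_nhds.mp htail ε' hε'0
      filter_upwards [this] with y hy
      simpa [Real.dist_eq] using hy
    obtain ⟨a, ha⟩ := eventually_atTop.mp habs
    set y₁ : ℝ := max a (max y₀ 1) with hy₁def
    have hy₁0 : (1 : ℝ) ≤ y₁ := le_max_of_le_right (le_max_right _ _)
    have hy₁pos : (0 : ℝ) < y₁ := lt_of_lt_of_le one_pos hy₁0
    have hy₁y₀ : y₀ ≤ y₁ := le_max_of_le_right (le_max_left _ _)
    -- bounds (A)
    have hA : ∀ y : ℝ, y₁ ≤ y →
        (1 - ε') * (c * y ^ (-α)) ≤ 1 - F y ∧ 1 - F y ≤ (1 + ε') * (c * y ^ (-α)) := by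
      intro y hy
      have hy0 : (0 : ℝ) < y := lt_of_lt_of_le hy₁pos hy
      have hcy : (0 : ℝ) < c * y ^ (-α) := mul_pos hc (Real.rpow_pos_of_pos hy0 _)
      have ht := ha y (le_trans (le_max_left _ _) hy)
      have ht1 : 1 - ε' ≤ 1 + (d * y ^ (-ρ) + e y) := by
        have := abs_lt.mp ht
        linarith [this.1]
      have ht2 : 1 + (d * y ^ (-ρ) + e y) ≤ 1 + ε' := by
        have := abs_lt.mp ht
        linarith [this.2]
      have heqy := heq y (le_trans hy₁y₀ hy)
      constructor
      · calc (1 - ε') * (c * y ^ (-α)) ≤ (1 + (d * y ^ (-ρ) + e y)) * (c * y ^ (-α)) := by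
              exact mul_le_mul_of_nonneg_right ht1 (le_of_lt hcy)
          _ = 1 - F y := by rw [heqy]; ring
      · calc 1 - F y = (1 + (d * y ^ (-ρ) + e y)) * (c * y ^ (-α)) := by rw [heqy]; ring
          _ ≤ (1 + ε') * (c * y ^ (-α)) := mul_le_mul_of_nonneg_right ht2 (le_of_lt hcy)
    -- F y₁ < 1
    have hFy₁ : F y₁ < 1 := by
      have := (hA y₁ le_rfl).1
      have hcy : (0 : ℝ) < c * y₁ ^ (-α) := mul_pos hc (Real.rpow_pos_of_pos hy₁pos _)
      nlinarith
    have hy₁α : (0 : ℝ) < y₁ ^ α := Real.rpow_pos_of_pos hy₁pos _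
    have hPpos : (0 : ℝ) < (1 + ε') * c := mul_pos (by linarith) hc
    set q₀ : ℝ := max (F y₁) (1 - (1 + ε') * c / y₁ ^ α) with hq₀def
    have hq₀lt : q₀ < 1 := by
      apply max_lt hFy₁
      have : (0 : ℝ) < (1 + ε') * c / y₁ ^ α := div_pos hPpos hy₁α
      linarith
    filter_upwards [Ioo_mem_nhdsLT_of_mem (show (1:ℝ) ∈ Ioc q₀ 1 from ⟨hq₀lt, le_rfl⟩)]
      with q hq
    obtain ⟨hqlo, hqhi⟩ := hq
    have h1q : (0 : ℝ) < 1 - q := by linarith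
    have hqF : F y₁ < q := lt_of_le_of_lt (le_max_left _ _) hqlo
    have hqy : 1 - (1 + ε') * c / y₁ ^ α < q :=
      lt_of_le_of_lt (le_max_right _ _) hqlo
    -- the set S
    have hS_sub : ∀ y ∈ {y : ℝ | q ≤ F y}, y₁ ≤ y := by
      intro y hy
      by_contra hcon
      push_neg at hcon
      exact absurd (le_trans hy (hmono (le_of_lt hcon))) (not_le.mpr hqF)
    have hbdd : BddBelow {y : ℝ | q ≤ F y} := ⟨y₁, hS_sub⟩
    -- upper bound element y₂
    set X : ℝ := (1 + ε') * c / (1 - q) with hXdef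
    have hXpos : (0 : ℝ) < X := div_pos hPpos h1q
    set y₂ : ℝ := X ^ (1 / α) with hy₂def
    have hy₂pos : (0 : ℝ) < y₂ := Real.rpow_pos_of_pos hXpos _
    have hy₂α : y₂ ^ α = X := by
      rw [hy₂def, ← Real.rpow_mul (le_of_lt hXpos), one_div,
        inv_mul_cancel₀ (ne_of_gt hα), Real.rpow_one]
    have hy₁X : y₁ ^ α ≤ X := by
      rw [hXdef, le_div_iff₀ h1q]
      have : (1 - q) * y₁ ^ α < (1 + ε') * c := by
        have h2 : 1 - q < (1 + ε') * c / y₁ ^ α := by linarith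
        calc (1 - q) * y₁ ^ α < ((1 + ε') * c / y₁ ^ α) * y₁ ^ α :=
              mul_lt_mul_of_pos_right h2 hy₁α
          _ = (1 + ε') * c := by field_simp
      linarith
    have hy₁y₂ : y₁ ≤ y₂ := by
      have := Real.rpow_le_rpow (le_of_lt hy₁α) hy₁X (le_of_lt (one_div_pos.mpr hα))
      rwa [← Real.rpow_mul (le_of_lt hy₁pos), mul_one_div, div_self (ne_of_gt hα),
        Real.rpow_one, ← hy₂def] at this
    have hy₂mem : y₂ ∈ {y : ℝ | q ≤ F y} := by
      have hup := (hA y₂ (le_trans hy₁y₂ le_rfl)).2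
      have hcalc : (1 + ε') * (c * y₂ ^ (-α)) = 1 - q := by
        rw [Real.rpow_neg (le_of_lt hy₂pos), hy₂α, hXdef]
        field_simp
      have : 1 - F y₂ ≤ 1 - q := by rw [← hcalc]; exact hup
      simpa [Set.mem_setOf_eq] using by linarith
    have hQle : Q q ≤ y₂ := csInf_le hbdd hy₂mem
    have hQge₁ : y₁ ≤ Q q := le_csInf ⟨y₂, hy₂mem⟩ hS_sub
    have hQpos : (0 : ℝ) < Q q := lt_of_lt_of_le hy₁pos hQge₁
    -- lower bound y₃
    set X' : ℝ := (1 - ε') * c / (1 - q) with hX'def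
    have hX'pos : (0 : ℝ) < X' := div_pos (mul_pos (by linarith) hc) h1q
    set y₃ : ℝ := X' ^ (1 / α) with hy₃def
    have hy₃α : y₃ ^ α = X' := by
      rw [hy₃def, ← Real.rpow_mul (le_of_lt hX'pos), one_div,
        inv_mul_cancel₀ (ne_of_gt hα), Real.rpow_one]
    have hy₃lb : ∀ y ∈ {y : ℝ | q ≤ F y}, y₃ ≤ y := by
      intro y hy
      have hy₁y : y₁ ≤ y := hS_sub y hy
      have hy0 : (0 : ℝ) < y := lt_of_lt_of_le hy₁pos hy₁y
      have hyα : (0 : ℝ) < y ^ α := Real.rpow_pos_of_pos hy0 _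
      have hlow := (hA y hy₁y).1
      have hFyq : (1 : ℝ) - F y ≤ 1 - q := by
        have : q ≤ F y := hy
        linarith
      have h3 : (1 - ε') * (c * (y ^ α)⁻¹) ≤ 1 - q := by
        rw [← Real.rpow_neg (le_of_lt hy0)] at *
        exact le_trans hlow hFyq
      have h4 : (1 - ε') * c ≤ (1 - q) * y ^ α := by
        have := mul_le_mul_of_nonneg_right h3 (le_of_lt hyα)
        calc (1 - ε') * c = (1 - ε') * (c * (y ^ α)⁻¹) * y ^ α := by
              field_simp
          _ ≤ (1 - q) * y ^ α := this
      have h5 : X' ≤ y ^ α := by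
        rw [hX'def, div_le_iff₀ h1q]
        linarith [h4]
      have := Real.rpow_le_rpow (le_of_lt hX'pos) h5 (le_of_lt (one_div_pos.mpr hα))
      rwa [← Real.rpow_mul (le_of_lt hy0), mul_one_div, div_self (ne_of_gt hα),
        Real.rpow_one, ← hy₃def] at this
    have hQge₃ : y₃ ≤ Q q := le_csInf ⟨y₂, hy₂mem⟩ hy₃lb
    -- conclude the three bounds
    have hy₃pos : (0 : ℝ) < y₃ := Real.rpow_pos_of_pos hX'pos _
    have hQαle : (Q q) ^ α ≤ X := by
      have := Real.rpow_le_rpow (le_of_lt hQpos) hQle (le_of_lt hα)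
      rwa [hy₂α] at this
    have hQαge : X' ≤ (Q q) ^ α := by
      have := Real.rpow_le_rpow (le_of_lt hy₃pos) hQge₃ (le_of_lt hα)
      rwa [hy₃α] at this
    refine ⟨?_, ?_, le_trans hy₁0 hQge₁⟩
    · have := mul_le_mul_of_nonneg_left hQαge (le_of_lt h1q)
      calc (1 - ε') * c = (1 - q) * X' := by rw [hX'def]; field_simp
        _ ≤ (1 - q) * (Q q) ^ α := this
    · have := mul_le_mul_of_nonneg_left hQαle (le_of_lt h1q)
      calc (1 - q) * (Q q) ^ α ≤ (1 - q) * X := this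
        _ = (1 + ε') * c := by rw [hXdef]; field_simp
  -- g := (1-q) * (Q q)^α tends to c
  have hg : Tendsto (fun q : ℝ => (1 - q) * (Q q) ^ α)
      (nhdsWithin (1 : ℝ) (Iio 1)) (nhds c) := by
    rw [Metric.tendsto_nhds]
    intro ε hε
    set ε' : ℝ := min (ε / (2 * c)) (1 / 2) with hε'def
    have hε'0 : 0 < ε' := lt_min (div_pos hε (by linarith)) (by norm_num)
    have hε'1 : ε' < 1 := lt_of_le_of_lt (min_le_right _ _) (by norm_num)
    filter_upwards [key ε' hε'0 hε'1] with q ⟨h1, h2, _⟩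
    have hεc : ε' * c ≤ ε / 2 := by
      have h := min_le_left (ε / (2 * c)) (1 / 2)
      calc ε' * c ≤ (ε / (2 * c)) * c := mul_le_mul_of_nonneg_right h (le_of_lt hc)
        _ = ε / 2 := by field_simp
    rw [Real.dist_eq, abs_lt]
    constructor <;> nlinarith
  -- compose with rpow 1/α
  have hgc : Tendsto (fun q : ℝ => ((1 - q) * (Q q) ^ α) ^ (1 / α))
      (nhdsWithin (1 : ℝ) (Iio 1)) (nhds (c ^ (1 / α))) :=
    hg.rpow_const (Or.inl (ne_of_gt hc))
  refine hgc.congr' ?_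
  filter_upwards [key (1/2) (by norm_num) (by norm_num), self_mem_nhdsWithin]
    with q hq hq1
  obtain ⟨-, -, hQ1⟩ := hq
  have hQ0 : (0 : ℝ) ≤ Q q := le_trans zero_le_one hQ1
  have h1q : (0 : ℝ) ≤ 1 - q := by
    have : q < 1 := hq1
    linarith
  rw [Real.mul_rpow h1q (Real.rpow_nonneg hQ0 _), ← Real.rpow_mul hQ0, mul_one_div,
    div_self (ne_of_gt hα), Real.rpow_one]
end

section
/- Let F : ℝ → ℝ be nondecreasing and right-continuous and satisfy the second-order Pareto tail condition with parameters (α, ρ, c, d), and define the generalized inverse Q(q) = inf{ y ∈ ℝ : F(y) ≥ q } for q ∈ (0, 1). Then the second-order quantile expansion holds: (1 − q)^(−ρ/α) · ( ((1 − q)/c)^(1/α) · Q(q) − 1 ) → (d/α) · c^(−ρ/α) as q → 1⁻. Equivalently, Q(1 − u) = (c/u)^(1/α) · (1 + (d/α)·(u/c)^(ρ/α) + o(u^(ρ/α))) as u → 0⁺. -/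
/-!
Write `1 - q = c t^(-α)`, i.e. `t = (c / (1 - q))^(1/α) → ∞`. Evaluating the tail condition at
`y = t (1 + s t^(-ρ))` and expanding `(1 + s t^(-ρ))^(-α) = 1 - α s t^(-ρ) + o(t^(-ρ))` gives
`1 - F y = c t^(-α) (1 + (d - α s) t^(-ρ) + o(t^(-ρ)))`. Hence eventually `F y < q` when
`s < d/α` and `q ≤ F y` when `s > d/α`, so by monotonicity of `F` the quantile is squeezed
between `t (1 + s t^(-ρ))` and `t (1 + s' t^(-ρ))` for any `s < d/α < s'`; that is,
`t^ρ (Q q / t - 1) → d/α`.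
-/

open Filter MeasureTheory Real Set

open Topology

theorem tendsto_of_forall_eventually_mem_Icc {ι α : Type*} [LinearOrder α] [DenselyOrdered α]
    [NoMinOrder α] [NoMaxOrder α] [TopologicalSpace α] [OrderTopology α]
    {l : Filter ι} {f : ι → α} {a : α}
    (h : ∀ b < a, ∀ b' > a, ∀ᶠ i in l, f i ∈ Icc b b') : Tendsto f l (𝓝 a) := by
  refine tendsto_order.2 ⟨fun b hb => ?_, fun b' hb' => ?_⟩
  · obtain ⟨m, hbm, hma⟩ := exists_between hb
    obtain ⟨b', hb'⟩ := exists_gt a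
    filter_upwards [h m hma b' hb'] with i hi using hbm.trans_le hi.1
  · obtain ⟨m, ham, hmb⟩ := exists_between hb'
    obtain ⟨b, hb⟩ := exists_lt a
    filter_upwards [h b hb m ham] with i hi using hi.2.trans_lt hmb

theorem Monotone.csInf_setOf_le_mem_Icc {α β : Type*} [ConditionallyCompleteLinearOrder α]
    [Preorder β] {F : α → β} (hF : Monotone F) {q : β} {a b : α} (ha : F a < q)
    (hb : q ≤ F b) :
    sInf {y | q ≤ F y} ∈ Icc a b := by
  have hlow : a ∈ lowerBounds {y | q ≤ F y} := fun _ hy =>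
    (hF.reflect_lt (ha.trans_le hy)).le
  exact ⟨le_csInf ⟨b, hb⟩ hlow, csInf_le ⟨a, hlow⟩ hb⟩

theorem tendsto_one_add_mul_rpow_sub_one_div (s α : ℝ) :
    Tendsto (fun t : ℝ => ((1 + s * t) ^ (-α) - 1) / t) (𝓝[≠] 0) (𝓝 (-(α * s))) := by
  have hpow : HasDerivAt (fun x : ℝ => x ^ (-α)) (-α) 1 := by
    simpa using Real.hasDerivAt_rpow_const (p := -α) (Or.inl one_ne_zero)
  have h := (hpow.comp_of_eq 0 (((hasDerivAt_id 0).const_mul s).const_add 1) (by simp))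
  have := hasDerivAt_iff_tendsto_slope.1 h
  convert this using 2 with t
  · simp [slope_def_field, Function.comp_def]
  · ring

namespace ParetoTail

variable {F : ℝ → ℝ} {α ρ c d : ℝ}

theorem tendsto_tail_ratio (hF : ParetoTail F α ρ c d) (s : ℝ) :
    Tendsto (fun t => t ^ ρ * ((1 - F (t * (1 + s * t ^ (-ρ)))) / (c * t ^ (-α)) - 1))
      atTop (𝓝 (d - α * s)) := by
  obtain ⟨-, hρ, hc, y₀, -, e, he, htail⟩ := hF
  set w : ℝ → ℝ := fun t => 1 + s * t ^ (-ρ)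
  have hv : Tendsto (fun t : ℝ => t ^ (-ρ)) atTop (𝓝[>] 0) :=
    tendsto_nhdsWithin_iff.2 ⟨tendsto_rpow_neg_atTop hρ,
      (eventually_gt_atTop 0).mono fun t ht => rpow_pos_of_pos ht _⟩
  have hw : Tendsto w atTop (𝓝 1) := by
    simpa using ((tendsto_rpow_neg_atTop hρ).const_mul s).const_add 1
  have hw_pow (β : ℝ) : Tendsto (fun t => w t ^ β) atTop (𝓝 1) := by
    simpa using hw.rpow_const (Or.inl one_ne_zero) (p := β)
  have htw : Tendsto (fun t => t * w t) atTop atTop := tendsto_id.atTop_mul_pos one_pos hw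
  have hslope : Tendsto (fun t => (w t ^ (-α) - 1) / t ^ (-ρ)) atTop (𝓝 (-(α * s))) :=
    (tendsto_one_add_mul_rpow_sub_one_div s α).comp (hv.mono_right (nhdsWithin_mono _ (by simp)))
  have hrest : Tendsto (fun t => w t ^ (-α) * (d * w t ^ (-ρ) + w t ^ (-ρ) *
      ((t * w t) ^ ρ * e (t * w t)))) atTop (𝓝 d) := by
    simpa using (hw_pow (-α)).mul
      (((hw_pow (-ρ)).const_mul d).add ((hw_pow (-ρ)).mul (he.comp htw)))
  refine ((hslope.add hrest).congr' ?_).trans (by rw [neg_add_eq_sub])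
  filter_upwards [eventually_gt_atTop 0, hw.eventually_const_lt one_pos,
    htw.eventually_ge_atTop y₀] with t ht hwt hy
  rw [show F (t * (1 + s * t ^ (-ρ))) = F (t * w t) from rfl, htail _ hy]
  simp only [mul_rpow ht.le hwt.le, rpow_neg ht.le, rpow_neg hwt.le]
  have : t ^ ρ ≠ 0 := (rpow_pos_of_pos ht ρ).ne'
  have : w t ^ ρ ≠ 0 := (rpow_pos_of_pos hwt ρ).ne'
  have : w t ^ α ≠ 0 := (rpow_pos_of_pos hwt α).ne'
  have : t ^ α ≠ 0 := (rpow_pos_of_pos ht α).ne'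
  field_simp
  ring

theorem eventually_lt_one_sub (hF : ParetoTail F α ρ c d) {s : ℝ} (hs : s < d / α) :
    ∀ᶠ t in atTop, F (t * (1 + s * t ^ (-ρ))) < 1 - c * t ^ (-α) := by
  have hlim : 0 < d - α * s := sub_pos.2 ((lt_div_iff₀' hF.1).1 hs)
  filter_upwards [(hF.tendsto_tail_ratio s).eventually_const_lt hlim, eventually_gt_atTop 0]
    with t hpos ht
  have hu : 0 < c * t ^ (-α) := mul_pos hF.2.2.1 (rpow_pos_of_pos ht _)
  exact lt_sub_comm.1 <|
    (one_lt_div hu).1 (sub_pos.1 (pos_of_mul_pos_right hpos (rpow_nonneg ht.le ρ)))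

theorem eventually_one_sub_le (hF : ParetoTail F α ρ c d) {s : ℝ} (hs : d / α < s) :
    ∀ᶠ t in atTop, 1 - c * t ^ (-α) ≤ F (t * (1 + s * t ^ (-ρ))) := by
  have hlim : d - α * s < 0 := sub_neg.2 ((div_lt_iff₀' hF.1).1 hs)
  filter_upwards [(hF.tendsto_tail_ratio s).eventually_lt_const hlim, eventually_gt_atTop 0]
    with t hneg ht
  have hu : 0 < c * t ^ (-α) := mul_pos hF.2.2.1 (rpow_pos_of_pos ht _)
  exact (sub_lt_comm.1 <|
    (div_lt_one hu).1 (sub_neg.1 (neg_of_mul_neg_right hneg (rpow_nonneg ht.le ρ)))).le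

theorem tendsto_quantile (hF : ParetoTail F α ρ c d) (hmono : Monotone F) :
    Tendsto (fun t => t ^ ρ * (sInf {y | 1 - c * t ^ (-α) ≤ F y} / t - 1)) atTop
      (𝓝 (d / α)) := by
  refine tendsto_of_forall_eventually_mem_Icc fun s hs s' hs' => ?_
  filter_upwards [hF.eventually_lt_one_sub hs, hF.eventually_one_sub_le hs',
    eventually_gt_atTop 0] with t hlo hhi ht
  have hQ := hmono.csInf_setOf_le_mem_Icc hlo hhi
  have hrescale (x : ℝ) : t ^ ρ * (t * (1 + x * t ^ (-ρ)) / t - 1) = x := by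
    rw [mul_div_cancel_left₀ _ ht.ne', rpow_neg ht.le]
    field_simp [(rpow_pos_of_pos ht ρ).ne']
    ring
  have hmono_t : Monotone fun y => t ^ ρ * (y / t - 1) := fun y y' h =>
    mul_le_mul_of_nonneg_left (by gcongr) (rpow_nonneg ht.le ρ)
  exact ⟨(hrescale s).symm.le.trans (hmono_t hQ.1), (hmono_t hQ.2).trans (hrescale s').le⟩

end ParetoTail

theorem tendsto_div_one_sub_rpow_atTop {c α : ℝ} (hc : 0 < c) (hα : 0 < α) :
    Tendsto (fun q => (c / (1 - q)) ^ (1 / α)) (𝓝[<] 1) atTop := by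
  have hu : Tendsto (fun q : ℝ => 1 - q) (𝓝[<] 1) (𝓝[>] 0) := by
    refine tendsto_nhdsWithin_iff.2
      ⟨?_, eventually_nhdsWithin_of_forall fun q hq => mem_Ioi.2 (sub_pos.2 hq)⟩
    exact tendsto_nhdsWithin_of_tendsto_nhds <| by
      simpa using (continuous_sub_left (1 : ℝ)).tendsto 1
  exact (tendsto_rpow_atTop (by positivity)).comp
    ((tendsto_inv_nhdsGT_zero.comp hu).const_mul_atTop hc)

theorem mul_div_rpow_one_div_rpow_neg {u c α : ℝ} (hu : 0 < u) (hc : 0 < c) (hα : α ≠ 0) :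
    c * ((c / u) ^ (1 / α)) ^ (-α) = u := by
  rw [← rpow_mul (div_pos hc hu).le, one_div_mul_eq_div, neg_div, div_self hα, rpow_neg_one,
    inv_div, mul_div_cancel₀ _ hc.ne']

theorem rpow_neg_mul_rescaled_sub_one {u c : ℝ} (hu : 0 < u) (hc : 0 < c) (α ρ x : ℝ) :
    u ^ (-(ρ / α)) * ((u / c) ^ (1 / α) * x - 1) =
      ((c / u) ^ (1 / α)) ^ ρ * (x / (c / u) ^ (1 / α) - 1) * c ^ (-(ρ / α)) := by
  rw [← rpow_mul (div_pos hc hu).le, one_div_mul_eq_div]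
  simp only [div_rpow hc.le hu.le, div_rpow hu.le hc.le, rpow_neg hu.le, rpow_neg hc.le]
  have := (rpow_pos_of_pos hu (1 / α)).ne'
  have := (rpow_pos_of_pos hc (1 / α)).ne'
  have := (rpow_pos_of_pos hu (ρ / α)).ne'
  have := (rpow_pos_of_pos hc (ρ / α)).ne'
  field_simp

theorem statement9_general (F : ℝ → ℝ) (α ρ c d : ℝ) (hF : ParetoTail F α ρ c d)
    (hmono : Monotone F) :
    Tendsto (fun q : ℝ =>
        (1 - q) ^ (-(ρ / α)) * (((1 - q) / c) ^ (1 / α) * sInf {y : ℝ | q ≤ F y} - 1))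
      (nhdsWithin 1 (Set.Iio 1)) (nhds ((d / α) * c ^ (-(ρ / α)))) := by
  have ⟨hα, _, hc, _⟩ := hF
  refine (((hF.tendsto_quantile hmono).comp
    (tendsto_div_one_sub_rpow_atTop hc hα)).mul_const _).congr' ?_
  filter_upwards [self_mem_nhdsWithin] with q hq
  have hu : 0 < 1 - q := sub_pos.2 hq
  rw [Function.comp_apply, mul_div_rpow_one_div_rpow_neg hu hc hα.ne', sub_sub_cancel,
    rpow_neg_mul_rescaled_sub_one hu hc]

/-- Second-order extreme quantile expansion: if `F` is nondecreasing, right-continuous and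
satisfies the second-order Pareto tail condition, and `Q q = inf {y | F y ≥ q}`, then
`(1 - q)^(-ρ/α) * ( ((1 - q)/c)^(1/α) * Q q - 1 ) → (d/α) * c^(-ρ/α)` as `q → 1⁻`. -/
theorem statement9 (F : ℝ → ℝ) (α ρ c d : ℝ) (hF : ParetoTail F α ρ c d)
    (hmono : Monotone F) (hrc : ∀ x : ℝ, ContinuousWithinAt F (Set.Ici x) x) :
    Tendsto (fun q : ℝ =>
        (1 - q) ^ (-(ρ / α)) * (((1 - q) / c) ^ (1 / α) * sInf {y : ℝ | q ≤ F y} - 1))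
      (nhdsWithin 1 (Set.Iio 1)) (nhds ((d / α) * c ^ (-(ρ / α)))) :=
  statement9_general F α ρ c d hF hmono
end

section
/- Let F : ℝ → ℝ be nondecreasing and right-continuous and satisfy the second-order Pareto tail condition with parameters (α, ρ, c, d), define Q(q) = inf{ y ∈ ℝ : F(y) ≥ q } for q ∈ (0, 1), and define the tail quantile function U(s) = Q(1 − 1/s) for s > 1. Then for every x > 0, s^(ρ/α) · ( U(s·x)/U(s) − x^(1/α) ) → (d/α) · c^(−ρ/α) · x^(1/α) · (x^(−ρ/α) − 1) as s → ∞. (This is the second-order extended regular variation condition for U with auxiliary rate function proportional to s^(−ρ/α).) -/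
/-!
Inverting the tail expansion `1 - F y = c y^(-α) (1 + d y^(-ρ) + o(y^(-ρ)))` at the trial points
`y_a(s) = (c s)^(1/α) (1 + a s^(-ρ/α))` gives
`s (1 - F (y_a s)) = 1 + α (L - a) s^(-ρ/α) + o(s^(-ρ/α))` with `L = (d/α) c^(-ρ/α)`.
Hence, by monotonicity of `F`, `y_a(s) ≤ U s` eventually when `a < L` and `U s ≤ y_a(s)` eventually
when `a > L`, i.e. `U s = (c s)^(1/α) (1 + L s^(-ρ/α) + o(s^(-ρ/α)))`. Comparing this expansion at
`s x` and at `s` gives the theorem.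
-/

open Filter MeasureTheory Real Set

open Topology

noncomputable def trialQuantile (α γ c a s : ℝ) : ℝ :=
  (c * s) ^ (1 / α) * (1 + a * s ^ (-γ))

lemma tendsto_one_add_mul_rpow_neg (a : ℝ) {γ : ℝ} (hγ : 0 < γ) :
    Tendsto (fun s : ℝ => 1 + a * s ^ (-γ)) atTop (𝓝 1) := by
  simpa using ((tendsto_rpow_neg_atTop hγ).const_mul a).const_add 1

/-- The derivative of `u ↦ (1 + a u)^(-α)` at `0`, read along `u = s^(-γ) → 0`. -/
lemma tendsto_rpow_mul_one_add_mul_rpow_neg_rpow_sub_one (α a : ℝ) {γ : ℝ} (hγ : 0 < γ) :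
    Tendsto (fun s : ℝ => s ^ γ * ((1 + a * s ^ (-γ)) ^ (-α) - 1)) atTop (𝓝 (-(α * a))) := by
  have hderiv : HasDerivAt (fun u : ℝ => (1 + a * u) ^ (-α)) (-(α * a)) 0 := by
    have := (((hasDerivAt_id (0 : ℝ)).const_mul a).const_add 1).rpow_const
      (p := -α) (Or.inl (by simp))
    simpa [mul_comm] using this
  have hu : Tendsto (fun s : ℝ => s ^ (-γ)) atTop (𝓝[≠] 0) :=
    tendsto_nhdsWithin_of_tendsto_nhds_of_eventually_within _ (tendsto_rpow_neg_atTop hγ)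
      (by filter_upwards [eventually_gt_atTop 0] with s hs using (rpow_pos_of_pos hs _).ne')
  refine ((hasDerivAt_iff_tendsto_slope.mp hderiv).comp hu).congr' ?_
  filter_upwards [eventually_gt_atTop 0] with s hs
  simp [slope_def_field, rpow_neg hs.le, div_eq_mul_inv, mul_comm]

section trialQuantile

variable {α γ c a s : ℝ}

lemma trialQuantile_rpow_neg (hc : 0 ≤ c) (hs : 0 ≤ s) (ht : 0 ≤ 1 + a * s ^ (-γ)) (q : ℝ) :
    trialQuantile α γ c a s ^ (-q) = (c * s) ^ (-(q / α)) * (1 + a * s ^ (-γ)) ^ (-q) := by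
  rw [trialQuantile, mul_rpow (by positivity) ht, ← rpow_mul (by positivity)]
  ring_nf

lemma tendsto_trialQuantile_atTop (hα : 0 < α) (hγ : 0 < γ) (hc : 0 < c) :
    Tendsto (trialQuantile α γ c a) atTop atTop :=
  ((tendsto_rpow_atTop (by positivity)).comp (tendsto_id.const_mul_atTop hc)).atTop_mul_pos
    one_pos (tendsto_one_add_mul_rpow_neg a hγ)

lemma trialQuantile_le_iff (hc : 0 < c) (hs : 0 < s) {u : ℝ} :
    trialQuantile α γ c a s ≤ u ↔ a ≤ s ^ γ * (u / (c * s) ^ (1 / α) - 1) := by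
  have hP : 0 < (c * s) ^ (1 / α) := by positivity
  have hS : 0 < s ^ γ := by positivity
  rw [trialQuantile, ← le_div_iff₀' hP, ← le_sub_iff_add_le', rpow_neg hs.le,
    ← div_eq_mul_inv, div_le_iff₀ hS, mul_comm]

lemma le_trialQuantile_iff (hc : 0 < c) (hs : 0 < s) {u : ℝ} :
    u ≤ trialQuantile α γ c a s ↔ s ^ γ * (u / (c * s) ^ (1 / α) - 1) ≤ a := by
  have hP : 0 < (c * s) ^ (1 / α) := by positivity
  have hS : 0 < s ^ γ := by positivity
  rw [trialQuantile, ← div_le_iff₀' hP, ← sub_le_iff_le_add', rpow_neg hs.le,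
    ← div_eq_mul_inv, le_div_iff₀ hS, mul_comm]

end trialQuantile

lemma tendsto_rpow_mul_mul_tail_trialQuantile_sub_one {T e : ℝ → ℝ} {α ρ c d : ℝ} (a : ℝ)
    (hα : 0 < α) (hρ : 0 < ρ) (hc : 0 < c) (he : Tendsto (fun y => y ^ ρ * e y) atTop (𝓝 0))
    (hT : ∀ᶠ y in atTop, T y = c * y ^ (-α) * (1 + d * y ^ (-ρ) + e y)) :
    Tendsto (fun s => s ^ (ρ / α) * (s * T (trialQuantile α (ρ / α) c a s) - 1)) atTop
      (𝓝 (d * c ^ (-(ρ / α)) - α * a)) := by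
  set γ := ρ / α
  have hγ : 0 < γ := by positivity
  set y := trialQuantile α γ c a
  set t := fun s : ℝ => 1 + a * s ^ (-γ)
  have ht : Tendsto t atTop (𝓝 1) := tendsto_one_add_mul_rpow_neg a hγ
  have hy : Tendsto y atTop atTop := tendsto_trialQuantile_atTop hα hγ hc
  -- with `y = y s`, `t = t s`: `s^γ (s T y - 1) = s^γ (t^(-α) - 1) + t^(-α) (s^γ y^(-ρ)) (d + y^ρ e y)`
  -- and `s^γ y^(-ρ) = c^(-γ) t^(-ρ)`
  have hlim : Tendsto (fun s => s ^ γ * (t s ^ (-α) - 1) +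
      t s ^ (-α) * (c ^ (-γ) * t s ^ (-ρ) * (d + y s ^ ρ * e (y s)))) atTop
      (𝓝 (-(α * a) + 1 ^ (-α) * (c ^ (-γ) * 1 ^ (-ρ) * (d + 0)))) :=
    (tendsto_rpow_mul_one_add_mul_rpow_neg_rpow_sub_one α a hγ).add
      ((ht.rpow_const (by simp)).mul
        (((ht.rpow_const (by simp)).const_mul _).mul ((he.comp hy).const_add d)))
  rw [one_rpow, one_rpow,
    show -(α * a) + 1 * (c ^ (-γ) * 1 * (d + 0)) = d * c ^ (-γ) - α * a by ring] at hlim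
  refine hlim.congr' ?_
  filter_upwards [eventually_gt_atTop 0, ht.eventually (lt_mem_nhds one_pos), hy.eventually hT]
    with s hs hts hTs
  have hys : 0 < y s := by simp only [y, trialQuantile]; positivity
  have hpowα : s * (c * y s ^ (-α)) = t s ^ (-α) := by
    rw [trialQuantile_rpow_neg hc.le hs.le hts.le, div_self hα.ne', rpow_neg_one]
    field_simp
    rfl
  have hpowρ : s ^ γ * y s ^ (-ρ) = c ^ (-γ) * t s ^ (-ρ) := by
    have hss : s ^ γ * s ^ (-γ) = 1 := by rw [← rpow_add hs]; simp
    rw [trialQuantile_rpow_neg hc.le hs.le hts.le, mul_rpow hc.le hs.le]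
    linear_combination c ^ (-γ) * t s ^ (-ρ) * hss
  have hinv : y s ^ (-ρ) * y s ^ ρ = 1 := by rw [← rpow_add hys]; simp
  rw [hTs, ← hpowα, ← hpowρ]
  linear_combination ((s * (c * y s ^ (-α))) * s ^ γ * e (y s)) * hinv

lemma mem_lowerBounds_superlevel {F : ℝ → ℝ} (hF : Monotone F) {q y : ℝ} (hy : F y < q) :
    y ∈ lowerBounds {z | q ≤ F z} :=
  fun _ hz => le_of_not_gt fun hzy => hy.not_ge (hz.trans (hF hzy.le))

lemma sInf_superlevel_mem_Icc {F : ℝ → ℝ} (hF : Monotone F) {q y₁ y₂ : ℝ} (h₁ : F y₁ < q)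
    (h₂ : q ≤ F y₂) : sInf {z | q ≤ F z} ∈ Icc y₁ y₂ :=
  ⟨le_csInf ⟨y₂, h₂⟩ (mem_lowerBounds_superlevel hF h₁),
    csInf_le ⟨y₁, mem_lowerBounds_superlevel hF h₁⟩ h₂⟩

section rescaledExcess

variable {s γ x : ℝ}

lemma lt_one_sub_one_div_of_rpow_mul_pos (hs : 0 < s) (h : 0 < s ^ γ * (s * (1 - x) - 1)) :
    x < 1 - 1 / s := by
  have h' : 1 < (1 - x) * s := by linarith [pos_of_mul_pos_right h (rpow_pos_of_pos hs γ).le]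
  linarith [(div_lt_iff₀ hs).2 h']

lemma one_sub_one_div_le_of_rpow_mul_neg (hs : 0 < s) (h : s ^ γ * (s * (1 - x) - 1) < 0) :
    1 - 1 / s ≤ x := by
  have h' : (1 - x) * s < 1 := by linarith [neg_of_mul_neg_right h (rpow_pos_of_pos hs γ).le]
  linarith [(lt_div_iff₀ hs).2 h']

end rescaledExcess

theorem tendsto_rpow_mul_quantile_div_sub_one {F U e : ℝ → ℝ} {α ρ c d : ℝ}
    (hα : 0 < α) (hρ : 0 < ρ) (hc : 0 < c) (hF : Monotone F)
    (he : Tendsto (fun y => y ^ ρ * e y) atTop (𝓝 0))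
    (hT : ∀ᶠ y in atTop, 1 - F y = c * y ^ (-α) * (1 + d * y ^ (-ρ) + e y))
    (hU : ∀ s, 1 < s → U s = sInf {y | 1 - 1 / s ≤ F y}) :
    Tendsto (fun s => s ^ (ρ / α) * (U s / (c * s) ^ (1 / α) - 1)) atTop
      (𝓝 (d / α * c ^ (-(ρ / α)))) := by
  set L := d / α * c ^ (-(ρ / α))
  have hexcess (a : ℝ) : Tendsto
      (fun s => s ^ (ρ / α) * (s * (1 - F (trialQuantile α (ρ / α) c a s)) - 1)) atTop
      (𝓝 (α * (L - a))) := by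
    convert tendsto_rpow_mul_mul_tail_trialQuantile_sub_one a hα hρ hc he hT using 2
    simp only [L]
    field_simp
  have hbracket (a b : ℝ) (ha : a < L) (hb : L < b) :
      ∀ᶠ s in atTop, U s ∈ Icc (trialQuantile α (ρ / α) c a s) (trialQuantile α (ρ / α) c b s) := by
    filter_upwards [eventually_gt_atTop 1,
      (hexcess a).eventually (lt_mem_nhds (mul_pos hα (sub_pos.2 ha))),
      (hexcess b).eventually (gt_mem_nhds (mul_neg_of_pos_of_neg hα (sub_neg.2 hb)))]
      with s hs hpos hneg
    rw [hU s hs]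
    exact sInf_superlevel_mem_Icc hF (lt_one_sub_one_div_of_rpow_mul_pos (by positivity) hpos)
      (one_sub_one_div_le_of_rpow_mul_neg (by positivity) hneg)
  refine tendsto_order.2 ⟨fun a' ha' => ?_, fun b' hb' => ?_⟩
  · obtain ⟨a, ha', ha⟩ := exists_between ha'
    filter_upwards [hbracket a (L + 1) ha (by linarith), eventually_gt_atTop 0] with s hs hs0
    exact ha'.trans_le ((trialQuantile_le_iff hc hs0).1 hs.1)
  · obtain ⟨b, hb, hb'⟩ := exists_between hb'
    filter_upwards [hbracket (L - 1) b (by linarith) hb, eventually_gt_atTop 0] with s hs hs0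
    exact ((le_trialQuantile_iff hc hs0).1 hs.2).trans_lt hb'

section secondOrder

variable {W : ℝ → ℝ} {γ L : ℝ}

lemma tendsto_one_of_tendsto_rpow_mul_sub_one (hγ : 0 < γ)
    (hW : Tendsto (fun s => s ^ γ * (W s - 1)) atTop (𝓝 L)) : Tendsto W atTop (𝓝 1) := by
  have h := ((tendsto_rpow_neg_atTop hγ).mul hW).const_add 1
  rw [zero_mul, add_zero] at h
  refine h.congr' ?_
  filter_upwards [eventually_gt_atTop 0] with s hs
  rw [← mul_assoc, ← rpow_add hs, neg_add_cancel, rpow_zero, one_mul, add_sub_cancel]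

lemma tendsto_rpow_mul_comp_mul_sub_one
    (hW : Tendsto (fun s => s ^ γ * (W s - 1)) atTop (𝓝 L)) {x : ℝ} (hx : 0 < x) :
    Tendsto (fun s => s ^ γ * (W (s * x) - 1)) atTop (𝓝 (x ^ (-γ) * L)) := by
  refine ((hW.comp (tendsto_id.atTop_mul_const hx)).const_mul (x ^ (-γ))).congr' ?_
  filter_upwards [eventually_gt_atTop 0] with s hs
  have hxx : x ^ (-γ) * x ^ γ = 1 := by rw [← rpow_add hx]; simp
  simp only [Function.comp, id, mul_rpow hs.le hx.le]
  linear_combination s ^ γ * (W (s * x) - 1) * hxx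

theorem tendsto_rpow_mul_div_comp_mul_sub_one (hγ : 0 < γ)
    (hW : Tendsto (fun s => s ^ γ * (W s - 1)) atTop (𝓝 L)) {x : ℝ} (hx : 0 < x) :
    Tendsto (fun s => s ^ γ * (W (s * x) / W s - 1)) atTop (𝓝 (L * (x ^ (-γ) - 1))) := by
  have hW1 := tendsto_one_of_tendsto_rpow_mul_sub_one hγ hW
  have h := ((tendsto_rpow_mul_comp_mul_sub_one hW hx).sub hW).div hW1 one_ne_zero
  rw [div_one, show x ^ (-γ) * L - L = L * (x ^ (-γ) - 1) by ring] at h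
  refine h.congr' ?_
  filter_upwards [hW1.eventually_ne one_ne_zero] with s hs
  simp only [Pi.div_apply]
  field_simp
  ring

end secondOrder

theorem statement10_general (F : ℝ → ℝ) (α ρ c d : ℝ) (hF : ParetoTail F α ρ c d)
    (hmono : Monotone F)
    (U : ℝ → ℝ) (hU : ∀ s : ℝ, 1 < s → U s = sInf {y : ℝ | 1 - 1 / s ≤ F y}) :
    ∀ x : ℝ, 0 < x →
      Tendsto (fun s : ℝ => s ^ (ρ / α) * (U (s * x) / U s - x ^ (1 / α)))
        atTop (nhds ((d / α) * c ^ (-(ρ / α)) * x ^ (1 / α) * (x ^ (-(ρ / α)) - 1))) := by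
  obtain ⟨hα, hρ, hc, y₀, -, e, he, htail⟩ := hF
  intro x hx
  have hV := tendsto_rpow_mul_quantile_div_sub_one hα hρ hc hmono he
    (eventually_atTop.2 ⟨y₀, htail⟩) hU
  have h := (tendsto_rpow_mul_div_comp_mul_sub_one (by positivity) hV hx).const_mul (x ^ (1 / α))
  rw [show x ^ (1 / α) * (d / α * c ^ (-(ρ / α)) * (x ^ (-(ρ / α)) - 1))
    = d / α * c ^ (-(ρ / α)) * x ^ (1 / α) * (x ^ (-(ρ / α)) - 1) by ring] at h
  refine h.congr' ?_
  filter_upwards [eventually_gt_atTop 0] with s hs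
  have hP : 0 < (c * s) ^ (1 / α) := by positivity
  have hPx : (c * (s * x)) ^ (1 / α) = (c * s) ^ (1 / α) * x ^ (1 / α) := by
    rw [← mul_assoc, mul_rpow (by positivity) hx.le]
  rw [hPx, div_div_div_eq, mul_comm (U (s * x)), mul_div_mul_comm, div_mul_cancel_left₀ hP.ne']
  field_simp

/-- Second-order extended regular variation of the tail quantile function
`U s = Q (1 - 1/s)` where `Q q = inf {y | F y ≥ q}`: if `F` is nondecreasing,
right-continuous and satisfies the second-order Pareto tail condition, then for every
`x > 0`, `s^(ρ/α) * (U(s x)/U(s) - x^(1/α)) → (d/α) c^(-ρ/α) x^(1/α) (x^(-ρ/α) - 1)`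
as `s → ∞`. -/
theorem statement10 (F : ℝ → ℝ) (α ρ c d : ℝ) (hF : ParetoTail F α ρ c d)
    (hmono : Monotone F) (hrc : ∀ x : ℝ, ContinuousWithinAt F (Set.Ici x) x)
    (U : ℝ → ℝ) (hU : ∀ s : ℝ, 1 < s → U s = sInf {y : ℝ | 1 - 1 / s ≤ F y}) :
    ∀ x : ℝ, 0 < x →
      Tendsto (fun s : ℝ => s ^ (ρ / α) * (U (s * x) / U s - x ^ (1 / α)))
        atTop (nhds ((d / α) * c ^ (-(ρ / α)) * x ^ (1 / α) * (x ^ (-(ρ / α)) - 1))) :=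
  statement10_general F α ρ c d hF hmono U hU
end

section
/- Let F : ℝ → ℝ be nondecreasing and right-continuous and satisfy the second-order Pareto tail condition with parameters (α, ρ, c, d), and define Q(q) = inf{ y ∈ ℝ : F(y) ≥ q } for q ∈ (0, 1). Let (t_n) be any sequence of reals with t_n → ∞ and (q_n) any sequence in (0,1) with q_n → 1. Then the Pareto-extrapolated quantile is relatively consistent: t_n · ( (1 − F(t_n)) / (1 − q_n) )^(1/α) / Q(q_n) → 1 as n → ∞. -/
open Filter MeasureTheory Real Set

/-! The second-order condition gives `1 - F y ~ c y^(-α)`. Since `F (Q q - 1) < q ≤ F (Q q)`,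
the latter by right-continuity, and `Q (q n) → ∞`, squeezing yields `1 - q n ~ c Q(q n)^(-α)`.
Dividing `1 - F (t n) ~ c (t n)^(-α)` by it gives
`(1 - F (t n)) / (1 - q n) ~ (Q(q n) / t n)^α`, and taking `1/α`-th powers concludes. -/

open Asymptotics Topology

lemma tendsto_zero_of_tendsto_rpow_mul {ρ : ℝ} (hρ : 0 < ρ) {e : ℝ → ℝ}
    (he : Tendsto (fun y => y ^ ρ * e y) atTop (𝓝 0)) : Tendsto e atTop (𝓝 0) := by
  have h := he.mul (tendsto_rpow_neg_atTop hρ)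
  rw [zero_mul] at h
  refine h.congr' ?_
  filter_upwards [eventually_gt_atTop 0] with y hy
  rw [rpow_neg hy.le, mul_right_comm, mul_inv_cancel₀ (rpow_pos_of_pos hy ρ).ne', one_mul]

lemma isEquivalent_sub_one_rpow (r : ℝ) :
    (fun y : ℝ => (y - 1) ^ r) ~[atTop] fun y => y ^ r := by
  refine isEquivalent_of_tendsto_one ?_
  have h : Tendsto (fun y : ℝ => (1 - y⁻¹) ^ r) atTop (𝓝 1) := by
    simpa using (tendsto_inv_atTop_zero.const_sub 1).rpow_const (Or.inl (by norm_num))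
  refine h.congr' ?_
  filter_upwards [eventually_gt_atTop 1] with y hy
  rw [Pi.div_apply, ← div_rpow (by linarith) (by linarith), sub_div, div_self (by positivity),
    one_div]

lemma Asymptotics.IsEquivalent.of_le_of_le {α : Type*} {l : Filter α} {u v w f : α → ℝ}
    (hu : u ~[l] f) (hw : w ~[l] f) (huv : ∀ᶠ x in l, u x ≤ v x)
    (hvw : ∀ᶠ x in l, v x ≤ w x) (hf : ∀ᶠ x in l, 0 < f x) : v ~[l] f := by
  have hf0 : ∀ᶠ x in l, f x ≠ 0 := hf.mono fun _ h => h.ne'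
  rw [isEquivalent_iff_tendsto_one hf0] at hu hw ⊢
  refine tendsto_of_tendsto_of_tendsto_of_le_of_le' hu hw ?_ ?_
  · filter_upwards [huv, hf] with x h hx using div_le_div_of_nonneg_right h hx.le
  · filter_upwards [hvw, hf] with x h hx using div_le_div_of_nonneg_right h hx.le

namespace ParetoTail

variable {F : ℝ → ℝ} {α ρ c d : ℝ}

theorem isEquivalent (hF : ParetoTail F α ρ c d) :
    (fun y => 1 - F y) ~[atTop] fun y => c * y ^ (-α) := by
  obtain ⟨-, hρ, -, y₀, -, e, he, hFe⟩ := hF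
  have hu : Tendsto (fun y => 1 + d * y ^ (-ρ) + e y) atTop (𝓝 1) := by
    simpa using (((tendsto_rpow_neg_atTop hρ).const_mul d).const_add 1).add
      (tendsto_zero_of_tendsto_rpow_mul hρ he)
  have h := (IsEquivalent.refl (u := fun y => c * y ^ (-α)) (l := atTop)).mul
    ((isEquivalent_const_iff_tendsto one_ne_zero).2 hu)
  refine (h.congr_right ?_).congr_left ?_
  · exact Eventually.of_forall fun y => by simp
  · filter_upwards [eventually_ge_atTop y₀] with y hy using (hFe y hy).symm

theorem tendsto_one (hF : ParetoTail F α ρ c d) : Tendsto F atTop (𝓝 1) := by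
  have h0 : Tendsto (fun y => c * y ^ (-α)) atTop (𝓝 0) := by
    simpa using (tendsto_rpow_neg_atTop hF.1).const_mul c
  simpa using (hF.isEquivalent.symm.tendsto_nhds h0).const_sub 1

theorem eventually_lt_one (hF : ParetoTail F α ρ c d) : ∀ᶠ y in atTop, F y < 1 := by
  have h := hF.isEquivalent.eventually_pos ?_
  · exact h.mono fun _ hy => by linarith
  · filter_upwards [eventually_gt_atTop 0] with y hy
    exact mul_pos hF.2.2.1 (rpow_pos_of_pos hy _)

end ParetoTail

noncomputable def quantile (F : ℝ → ℝ) (q : ℝ) : ℝ := sInf {y | q ≤ F y}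

section Quantile

variable {F : ℝ → ℝ} {q y : ℝ}

lemma bddBelow_setOf_le_apply (hF : Monotone F) (hy : F y < q) : BddBelow {x | q ≤ F x} :=
  ⟨y, fun _ hx => (hF.reflect_lt (hy.trans_le hx)).le⟩

lemma nonempty_setOf_le_apply (hF : Tendsto F atTop (𝓝 1)) (hq : q < 1) :
    {x | q ≤ F x}.Nonempty :=
  (hF.eventually (eventually_ge_nhds hq)).exists

lemma le_quantile (hF : Monotone F) (hne : {x | q ≤ F x}.Nonempty) (hy : F y < q) :
    y ≤ quantile F q :=
  le_csInf hne fun _ hx => (hF.reflect_lt (hy.trans_le hx)).le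

lemma apply_lt_of_lt_quantile (hbdd : BddBelow {x | q ≤ F x}) (hy : y < quantile F q) :
    F y < q :=
  not_le.1 (notMem_of_lt_csInf (s := {x | q ≤ F x}) hy hbdd)

lemma le_apply_quantile (hrc : ContinuousWithinAt F (Ici (quantile F q)) (quantile F q))
    (hne : {x | q ≤ F x}.Nonempty) (hbdd : BddBelow {x | q ≤ F x}) :
    q ≤ F (quantile F q) := by
  have h := (hrc.mono fun _ hx => csInf_le hbdd hx).mem_closure
    (csInf_mem_closure hne hbdd) (t := Ici q) fun _ hx => hx
  rwa [closure_Ici] at h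

variable {ι : Type*} {l : Filter ι} {p : ι → ℝ}

lemma tendsto_quantile_atTop (hF : Monotone F) (hlt : ∃ᶠ y in atTop, F y < 1)
    (hF1 : Tendsto F atTop (𝓝 1)) (hp : ∀ᶠ n in l, p n < 1) (hp1 : Tendsto p l (𝓝 1)) :
    Tendsto (fun n => quantile F (p n)) l atTop := by
  refine tendsto_atTop.2 fun M => ?_
  obtain ⟨y, hy, hMy⟩ := (hlt.and_eventually (eventually_ge_atTop M)).exists
  filter_upwards [hp, hp1.eventually (eventually_gt_nhds hy)] with n hn hyn
  exact hMy.trans (le_quantile hF (nonempty_setOf_le_apply hF1 hn) hyn)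

lemma one_sub_isEquivalent_quantile {α c : ℝ} (hF : Monotone F)
    (hrc : ∀ x, ContinuousWithinAt F (Ici x) x) (hlt : ∀ᶠ y in atTop, F y < 1)
    (hF1 : Tendsto F atTop (𝓝 1)) (htail : (fun y => 1 - F y) ~[atTop] fun y => c * y ^ (-α))
    (hc : 0 < c) (hp : ∀ᶠ n in l, p n < 1) (hp1 : Tendsto p l (𝓝 1)) :
    (fun n => 1 - p n) ~[l] fun n => c * quantile F (p n) ^ (-α) := by
  set Q := fun n => quantile F (p n)
  have hQ : Tendsto Q l atTop := tendsto_quantile_atTop hF hlt.frequently hF1 hp hp1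
  obtain ⟨y, hy⟩ := hlt.exists
  have hbdd : ∀ᶠ n in l, BddBelow {x | p n ≤ F x} :=
    (hp1.eventually (eventually_gt_nhds hy)).mono fun _ => bddBelow_setOf_le_apply hF
  have hshift : (fun y => c * (y - 1) ^ (-α)) ~[atTop] fun y => c * y ^ (-α) :=
    IsEquivalent.refl.mul (isEquivalent_sub_one_rpow (-α))
  refine IsEquivalent.of_le_of_le (htail.comp_tendsto hQ)
    ((htail.comp_tendsto (tendsto_atTop_add_const_right _ (-1) hQ)).trans
      (hshift.comp_tendsto hQ)) ?_ ?_ ?_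
  · filter_upwards [hp, hbdd] with n hn hb
    have hQn := le_apply_quantile (hrc _) (nonempty_setOf_le_apply hF1 hn) hb
    simp only [Function.comp_apply]
    linarith
  · filter_upwards [hbdd] with n hb
    have hQn := apply_lt_of_lt_quantile hb (sub_one_lt (Q n))
    simp only [Function.comp_apply, ← sub_eq_add_neg]
    linarith
  · filter_upwards [hQ.eventually_gt_atTop 0] with n hn
    exact mul_pos hc (rpow_pos_of_pos hn _)

end Quantile

/-- Relative consistency of the Pareto-extrapolated quantile: if `F` is nondecreasing,
right-continuous, satisfies the second-order Pareto tail condition, `Q q = inf {y | F y ≥ q}`,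
`t n → ∞` and `q n ∈ (0,1)` with `q n → 1`, then
`t n * ((1 - F (t n))/(1 - q n))^(1/α) / Q (q n) → 1`. -/
theorem statement13 (F : ℝ → ℝ) (α ρ c d : ℝ) (hF : ParetoTail F α ρ c d)
    (hmono : Monotone F) (hrc : ∀ x : ℝ, ContinuousWithinAt F (Set.Ici x) x)
    (t q : ℕ → ℝ) (ht : Tendsto t atTop atTop)
    (hq : ∀ n : ℕ, q n ∈ Set.Ioo (0 : ℝ) 1) (hq1 : Tendsto q atTop (nhds 1)) :
    Tendsto (fun n : ℕ =>
        t n * ((1 - F (t n)) / (1 - q n)) ^ (1 / α) / sInf {y : ℝ | q n ≤ F y})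
      atTop (nhds 1) := by
  have hc : 0 < c := hF.2.2.1
  have hp : ∀ᶠ n in atTop, q n < 1 := Eventually.of_forall fun n => (hq n).2
  have hQ : Tendsto (fun n => quantile F (q n)) atTop atTop :=
    tendsto_quantile_atTop hmono hF.eventually_lt_one.frequently hF.tendsto_one hp hq1
  have hequiv := (hF.isEquivalent.comp_tendsto ht).div (one_sub_isEquivalent_quantile hmono hrc
    hF.eventually_lt_one hF.tendsto_one hF.isEquivalent hc hp hq1)
  have hratio : Tendsto (fun n => (1 - F (t n)) / (1 - q n) / (quantile F (q n) / t n) ^ α)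
      atTop (𝓝 1) := by
    refine (isEquivalent_iff_tendsto_one ?_).1 (hequiv.congr_right ?_)
    · filter_upwards [ht.eventually_gt_atTop 0, hQ.eventually_gt_atTop 0] with n htn hQn
      positivity
    · filter_upwards [ht.eventually_gt_atTop 0, hQ.eventually_gt_atTop 0] with n htn hQn
      simp only [Pi.div_apply, Function.comp_apply, rpow_neg htn.le, rpow_neg hQn.le,
        div_rpow hQn.le htn.le]
      field_simp [hc.ne']
  have hlim := hratio.rpow_const (p := 1 / α) (Or.inl one_ne_zero)
  rw [one_rpow] at hlim
  refine hlim.congr' ?_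
  filter_upwards [ht.eventually_gt_atTop 0, hQ.eventually_gt_atTop 0,
    ht.eventually hF.eventually_lt_one] with n htn hQn hFn
  have hR : 0 ≤ (1 - F (t n)) / (1 - q n) := div_nonneg (by linarith) (by linarith [(hq n).2])
  change _ = _ / quantile F (q n)
  rw [div_rpow hR (by positivity), one_div, rpow_rpow_inv (by positivity) hF.1.ne']
  field_simp
end

section
/- For j ∈ {0, 1}, let F_j : ℝ → ℝ be nondecreasing and right-continuous and satisfy the second-order Pareto tail condition with parameters (α_j, ρ_j, c_j, d_j), and define Q_j(q) = inf{ y ∈ ℝ : F_j(y) ≥ q } for q ∈ (0, 1). Let (t_{1,n}), (t_{0,n}) be sequences of reals tending to ∞ and (q_n) a sequence in (0,1) with q_n → 1. Define the extrapolated quantiles Ŷ_{j,n} = t_{j,n} · ( (1 − F_j(t_{j,n})) / (1 − q_n) )^(1/α_j) and the quantile treatment effect QTE(q) = Q_1(q) − Q_0(q). Then ( Ŷ_{1,n} − Ŷ_{0,n} − QTE(q_n) ) / max(Q_1(q_n), Q_0(q_n)) → 0 as n → ∞; that is, the Pareto-extrapolated quantile treatment effect approximates the true quantile treatment effect with error negligible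 relative to the magnitude of the larger quantile. -/
/-!
Both the quantile `Q(q)` and the extrapolated quantile `Ŷ` are asymptotic to the first-order
Pareto quantile `(c / (1 - q)) ^ (1 / α)`. Write `h y = y * ((1 - F y) / c) ^ (1 / α)`, which
tends to `1`. For `Ŷ` this is immediate: `Ŷ * ((1 - q) / c) ^ (1 / α) = h t`, whatever `q` is.
For the quantile, once `y` is large, `q ≤ F y` says exactly `h y ≤ y * ((1 - q) / c) ^ (1 / α)`,
so the infimum of such `y` lies within a factor close to `1` of `(c / (1 - q)) ^ (1 / α)`;
monotonicity of `F` rules out small `y`. Hence `Ŷ_j / Q_j → 1`, and the error divided by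
`max Q₁ Q₀` is bounded by `|Ŷ₁ / Q₁ - 1| + |Ŷ₀ / Q₀ - 1|`.
-/

open Filter MeasureTheory Real Set

open Topology

lemma tendsto_one_add_mul_rpow_neg_add {ρ d : ℝ} {e : ℝ → ℝ} (hρ : 0 < ρ)
    (he : Tendsto (fun y => y ^ ρ * e y) atTop (𝓝 0)) :
    Tendsto (fun y => 1 + d * y ^ (-ρ) + e y) atTop (𝓝 1) := by
  have hneg := tendsto_rpow_neg_atTop hρ
  have he0 : Tendsto e atTop (𝓝 0) := by
    refine (by simpa using hneg.mul he :
      Tendsto (fun y => y ^ (-ρ) * (y ^ ρ * e y)) atTop (𝓝 0)).congr' ?_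
    filter_upwards [eventually_gt_atTop 0] with y hy
    rw [← mul_assoc, ← Real.rpow_add hy, neg_add_cancel, Real.rpow_zero, one_mul]
  simpa using ((hneg.const_mul d).const_add 1).add he0

lemma ParetoTail.exists_tail_eq {F : ℝ → ℝ} {α ρ c d : ℝ} (hF : ParetoTail F α ρ c d) :
    ∃ G : ℝ → ℝ, Tendsto G atTop (𝓝 1) ∧ ∀ᶠ y in atTop, 1 - F y = c * y ^ (-α) * G y := by
  obtain ⟨-, hρ, -, y₀, -, e, he, hFe⟩ := hF
  exact ⟨_, tendsto_one_add_mul_rpow_neg_add hρ he, eventually_atTop.2 ⟨y₀, hFe⟩⟩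

section FirstOrderTail

variable {F G : ℝ → ℝ} {α c : ℝ}

lemma eventually_lt_one_of_tail_eq (hc : 0 < c) (hG : Tendsto G atTop (𝓝 1))
    (hFG : ∀ᶠ y in atTop, 1 - F y = c * y ^ (-α) * G y) : ∀ᶠ y in atTop, F y < 1 := by
  filter_upwards [hFG, hG.eventually (eventually_gt_nhds one_pos), eventually_gt_atTop 0]
    with y hy hGy hy0
  have : 0 < c * y ^ (-α) * G y := by positivity
  linarith

lemma tendsto_mul_tail_rpow_of_tail_eq (hα : 0 < α) (hc : 0 < c) (hG : Tendsto G atTop (𝓝 1))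
    (hFG : ∀ᶠ y in atTop, 1 - F y = c * y ^ (-α) * G y) :
    Tendsto (fun y => y * ((1 - F y) / c) ^ (1 / α)) atTop (𝓝 1) := by
  have h := hG.rpow_const (p := 1 / α) (Or.inl one_ne_zero)
  rw [Real.one_rpow] at h
  refine h.congr' ?_
  filter_upwards [hFG, hG.eventually (eventually_gt_nhds one_pos), eventually_gt_atTop 0]
    with y hy hGy hy0
  rw [hy, mul_assoc, mul_div_cancel_left₀ _ hc.ne', Real.mul_rpow (by positivity) hGy.le,
    ← Real.rpow_mul hy0.le, neg_mul, mul_one_div_cancel hα.ne', Real.rpow_neg_one,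
    ← mul_assoc, mul_inv_cancel₀ hy0.ne', one_mul]

end FirstOrderTail

section Quantile

variable {F : ℝ → ℝ} {α c : ℝ}

lemma tendsto_tail_rpow_nhdsGT_zero (hα : 0 < α) (hc : 0 < c) :
    Tendsto (fun p => ((1 - p) / c) ^ (1 / α)) (𝓝[<] 1) (𝓝[>] 0) := by
  refine tendsto_nhdsWithin_iff.2 ⟨?_, ?_⟩
  · have h : Tendsto (fun p : ℝ => ((1 - p) / c) ^ (1 / α)) (𝓝 1)
        (𝓝 (((1 - 1) / c) ^ (1 / α))) :=
      ((tendsto_const_nhds.sub tendsto_id).div_const c).rpow_const (Or.inr (by positivity))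
    rw [sub_self, zero_div, Real.zero_rpow (by positivity)] at h
    exact h.mono_left nhdsWithin_le_nhds
  · filter_upwards [self_mem_nhdsWithin] with p (hp : p < 1)
    exact Real.rpow_pos_of_pos (div_pos (sub_pos.2 hp) hc) _

lemma le_iff_tail_rpow_le (hα : 0 < α) (hc : 0 < c) {p y : ℝ} (hp : p < 1) (hy : F y ≤ 1) :
    p ≤ F y ↔ ((1 - F y) / c) ^ (1 / α) ≤ ((1 - p) / c) ^ (1 / α) := by
  rw [Real.rpow_le_rpow_iff (div_nonneg (sub_nonneg.2 hy) hc.le)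
    (div_nonneg (sub_nonneg.2 hp.le) hc.le) (by positivity), div_le_div_iff_of_pos_right hc]
  constructor <;> intro <;> linarith

lemma eventually_le_mul_tail_rpow (hmono : Monotone F) (hα : 0 < α) (hc : 0 < c)
    (hF1 : ∀ᶠ y in atTop, F y ≤ 1)
    (hh : Tendsto (fun y => y * ((1 - F y) / c) ^ (1 / α)) atTop (𝓝 1)) {a : ℝ}
    (ha₀ : 0 < a) (ha : a < 1) :
    ∀ᶠ p in 𝓝[<] 1, ∀ y, p ≤ F y → a ≤ y * ((1 - p) / c) ^ (1 / α) := by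
  obtain ⟨Y, hY⟩ := ((hh.eventually (eventually_gt_nhds ha)).and
    (hF1.and (eventually_gt_atTop 0))).exists_forall_of_atTop
  have hu := tendsto_tail_rpow_nhdsGT_zero hα hc
  have hYu : Tendsto (fun p => Y * ((1 - p) / c) ^ (1 / α)) (𝓝[<] 1) (𝓝 0) := by
    simpa using (hu.mono_right nhdsWithin_le_nhds).const_mul Y
  filter_upwards [hYu.eventually (eventually_lt_nhds ha₀), hu.eventually self_mem_nhdsWithin,
    self_mem_nhdsWithin] with p hpY (hu₀ : 0 < _) (hp : p < 1) y hy
  by_contra! hya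
  set z := max y Y
  obtain ⟨hz, hz1, hz₀⟩ := hY z (le_max_right _ _)
  have hFz : p ≤ F z := hy.trans (hmono (le_max_left _ _))
  have hzu : z * ((1 - p) / c) ^ (1 / α) < a := by
    rw [max_mul_of_nonneg _ _ hu₀.le]; exact max_lt hya hpY
  have := mul_le_mul_of_nonneg_left ((le_iff_tail_rpow_le hα hc hp hz1).1 hFz)
    hz₀.le
  linarith

lemma eventually_le_apply_div_tail_rpow (hα : 0 < α) (hc : 0 < c)
    (hF1 : ∀ᶠ y in atTop, F y ≤ 1)
    (hh : Tendsto (fun y => y * ((1 - F y) / c) ^ (1 / α)) atTop (𝓝 1)) {b : ℝ} (hb : 1 < b) :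
    ∀ᶠ p in 𝓝[<] 1, p ≤ F (b / ((1 - p) / c) ^ (1 / α)) := by
  have hu := tendsto_tail_rpow_nhdsGT_zero hα hc
  have hz : Tendsto (fun p => b / ((1 - p) / c) ^ (1 / α)) (𝓝[<] 1) atTop :=
    (tendsto_inv_nhdsGT_zero.comp hu).const_mul_atTop (by linarith)
  filter_upwards [hz.eventually ((hh.eventually (eventually_lt_nhds hb)).and
    (hF1.and (eventually_gt_atTop 0))), hu.eventually self_mem_nhdsWithin,
    self_mem_nhdsWithin] with p ⟨hzb, hz1, hz₀⟩ (hu₀ : 0 < _) (hp : p < 1)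
  set u := ((1 - p) / c) ^ (1 / α)
  refine (le_iff_tail_rpow_le hα hc hp hz1).2 (le_of_mul_le_mul_left ?_ hz₀)
  rw [div_mul_cancel₀ _ hu₀.ne']
  exact hzb.le

lemma tendsto_quantile_mul_tail_rpow (hmono : Monotone F) (hα : 0 < α) (hc : 0 < c)
    (hF1 : ∀ᶠ y in atTop, F y ≤ 1)
    (hh : Tendsto (fun y => y * ((1 - F y) / c) ^ (1 / α)) atTop (𝓝 1)) :
    Tendsto (fun p => sInf {y | p ≤ F y} * ((1 - p) / c) ^ (1 / α)) (𝓝[<] 1) (𝓝 1) := by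
  have hpos := (tendsto_tail_rpow_nhdsGT_zero hα hc).eventually self_mem_nhdsWithin
  have hlow := fun {a} ha₀ ha => eventually_le_mul_tail_rpow hmono hα hc hF1 hh (a := a) ha₀ ha
  rw [tendsto_order]
  constructor
  · intro a ha
    obtain ⟨a', ha', ha'1⟩ := exists_between (max_lt ha one_half_lt_one)
    filter_upwards [hlow (one_half_pos.trans_le (le_max_right a _) |>.trans ha') ha'1,
      eventually_le_apply_div_tail_rpow hα hc hF1 hh one_lt_two, hpos]
      with p hl hmem (hu₀ : 0 < _)
    have : a' / ((1 - p) / c) ^ (1 / α) ≤ sInf {y | p ≤ F y} :=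
      le_csInf ⟨_, hmem⟩ fun y hy => (div_le_iff₀ hu₀).2 (hl y hy)
    have := (div_le_iff₀ hu₀).1 this
    linarith [le_max_left a (1 / 2)]
  · intro b hb
    obtain ⟨b', hb', hb'b⟩ := exists_between hb
    filter_upwards [hlow one_half_pos one_half_lt_one,
      eventually_le_apply_div_tail_rpow hα hc hF1 hh hb', hpos]
      with p hl hmem (hu₀ : 0 < _)
    have hbdd : BddBelow {y | p ≤ F y} := ⟨_, fun y hy => (div_le_iff₀ hu₀).2 (hl y hy)⟩
    have := (le_div_iff₀ hu₀).1 (csInf_le hbdd hmem)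
    linarith

end Quantile

lemma tendsto_extrapolated_mul_tail_rpow {ι : Type*} {l : Filter ι} {F : ℝ → ℝ} {α c : ℝ}
    (hc : 0 < c) (hF1 : ∀ᶠ y in atTop, F y ≤ 1)
    (hh : Tendsto (fun y => y * ((1 - F y) / c) ^ (1 / α)) atTop (𝓝 1))
    {t q : ι → ℝ} (ht : Tendsto t l atTop) (hq : ∀ᶠ n in l, q n < 1) :
    Tendsto (fun n => t n * ((1 - F (t n)) / (1 - q n)) ^ (1 / α) * ((1 - q n) / c) ^ (1 / α))
      l (𝓝 1) := by
  refine (hh.comp ht).congr' ?_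
  filter_upwards [ht.eventually hF1, hq] with n hFn hqn
  have hq₀ : 0 < 1 - q n := sub_pos.2 hqn
  rw [Function.comp_apply, mul_assoc, ← Real.mul_rpow (div_nonneg (sub_nonneg.2 hFn) hq₀.le)
    (div_nonneg hq₀.le hc.le), div_mul_div_cancel₀ hq₀.ne']

lemma ParetoTail.tendsto_extrapolated_div_quantile {F : ℝ → ℝ} {α ρ c d : ℝ}
    (hF : ParetoTail F α ρ c d) (hmono : Monotone F) {t q : ℕ → ℝ}
    (ht : Tendsto t atTop atTop) (hq : Tendsto q atTop (𝓝[<] 1)) :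
    Tendsto (fun n => t n * ((1 - F (t n)) / (1 - q n)) ^ (1 / α) / sInf {y | q n ≤ F y})
        atTop (𝓝 1) ∧ ∀ᶠ n in atTop, 0 < sInf {y | q n ≤ F y} := by
  obtain ⟨G, hG, hFG⟩ := hF.exists_tail_eq
  obtain ⟨hα, -, hc, -⟩ := hF
  have hF1 := (eventually_lt_one_of_tail_eq hc hG hFG).mono fun _ => le_of_lt
  have hh := tendsto_mul_tail_rpow_of_tail_eq hα hc hG hFG
  have hE := tendsto_extrapolated_mul_tail_rpow hc hF1 hh ht (hq.eventually self_mem_nhdsWithin)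
  have hQ := (tendsto_quantile_mul_tail_rpow hmono hα hc hF1 hh).comp hq
  have hu := ((tendsto_tail_rpow_nhdsGT_zero hα hc).comp hq).eventually self_mem_nhdsWithin
  refine ⟨?_, ?_⟩
  · have hR := hE.div hQ one_ne_zero
    rw [div_one] at hR
    refine hR.congr' ?_
    filter_upwards [hu] with n (hn : 0 < _)
    exact mul_div_mul_right _ _ hn.ne'
  · filter_upwards [hQ.eventually (eventually_gt_nhds one_pos), hu] with n hn (hun : 0 < _)
    exact pos_of_mul_pos_left hn hun.le

lemma tendsto_sub_sub_div_max {ι : Type*} {l : Filter ι} {a b x y : ι → ℝ}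
    (ha : Tendsto (fun n => a n / x n) l (𝓝 1)) (hb : Tendsto (fun n => b n / y n) l (𝓝 1))
    (hx : ∀ᶠ n in l, 0 < x n) (hy : ∀ᶠ n in l, 0 < y n) :
    Tendsto (fun n => (a n - b n - (x n - y n)) / max (x n) (y n)) l (𝓝 0) := by
  refine squeeze_zero_norm' ?_ (by simpa using (ha.sub_const 1).abs.add (hb.sub_const 1).abs)
  filter_upwards [hx, hy] with n hxn hyn
  set M := max (x n) (y n)
  have hM : 0 < M := lt_max_of_lt_left hxn
  have hxM : |x n / M| ≤ 1 := by
    rw [abs_of_pos (div_pos hxn hM)]; exact div_le_one_of_le₀ (le_max_left _ _) hM.le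
  have hyM : |y n / M| ≤ 1 := by
    rw [abs_of_pos (div_pos hyn hM)]; exact div_le_one_of_le₀ (le_max_right _ _) hM.le
  have hsplit : (a n - b n - (x n - y n)) / M
      = (a n / x n - 1) * (x n / M) - (b n / y n - 1) * (y n / M) := by
    field_simp
    ring
  rw [Real.norm_eq_abs, hsplit]
  calc _ ≤ |(a n / x n - 1) * (x n / M)| + |(b n / y n - 1) * (y n / M)| := abs_sub _ _
    _ ≤ |a n / x n - 1| + |b n / y n - 1| := by
      rw [abs_mul, abs_mul]
      gcongr
      · exact mul_le_of_le_one_right (abs_nonneg _) hxM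
      · exact mul_le_of_le_one_right (abs_nonneg _) hyM

theorem statement14_general (F₁ F₀ : ℝ → ℝ) (α₁ ρ₁ c₁ d₁ α₀ ρ₀ c₀ d₀ : ℝ)
    (hF₁ : ParetoTail F₁ α₁ ρ₁ c₁ d₁) (hF₀ : ParetoTail F₀ α₀ ρ₀ c₀ d₀)
    (hmono₁ : Monotone F₁) (hmono₀ : Monotone F₀)
    (t₁ t₀ q : ℕ → ℝ) (ht₁ : Tendsto t₁ atTop atTop) (ht₀ : Tendsto t₀ atTop atTop)
    (hq : ∀ n : ℕ, q n ∈ Set.Ioo (0 : ℝ) 1) (hq1 : Tendsto q atTop (nhds 1)) :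
    Tendsto (fun n : ℕ =>
        (t₁ n * ((1 - F₁ (t₁ n)) / (1 - q n)) ^ (1 / α₁)
          - t₀ n * ((1 - F₀ (t₀ n)) / (1 - q n)) ^ (1 / α₀)
          - (sInf {y : ℝ | q n ≤ F₁ y} - sInf {y : ℝ | q n ≤ F₀ y}))
        / max (sInf {y : ℝ | q n ≤ F₁ y}) (sInf {y : ℝ | q n ≤ F₀ y}))
      atTop (nhds 0) := by
  have hq' : Tendsto q atTop (𝓝[<] 1) :=
    tendsto_nhdsWithin_iff.2 ⟨hq1, Eventually.of_forall fun n => (hq n).2⟩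
  obtain ⟨hR₁, hQ₁⟩ := hF₁.tendsto_extrapolated_div_quantile hmono₁ ht₁ hq'
  obtain ⟨hR₀, hQ₀⟩ := hF₀.tendsto_extrapolated_div_quantile hmono₀ ht₀ hq'
  exact tendsto_sub_sub_div_max hR₁ hR₀ hQ₁ hQ₀

/-- Relative consistency of the Pareto-extrapolated quantile treatment effect.
For `j ∈ {0,1}`, `F_j` is nondecreasing, right-continuous and satisfies the second-order
Pareto tail condition with parameters `(α_j, ρ_j, c_j, d_j)`, with quantile functions
`Q_j q = inf {y | F_j y ≥ q}`. With thresholds `t_{j,n} → ∞` and quantile levels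
`q n ∈ (0,1)`, `q n → 1`, the extrapolated quantiles
`Ŷ_{j,n} = t_{j,n} ((1 - F_j(t_{j,n}))/(1 - q n))^(1/α_j)` satisfy
`(Ŷ_{1,n} - Ŷ_{0,n} - (Q_1(q n) - Q_0(q n))) / max (Q_1(q n)) (Q_0(q n)) → 0`. -/
theorem statement14 (F₁ F₀ : ℝ → ℝ) (α₁ ρ₁ c₁ d₁ α₀ ρ₀ c₀ d₀ : ℝ)
    (hF₁ : ParetoTail F₁ α₁ ρ₁ c₁ d₁) (hF₀ : ParetoTail F₀ α₀ ρ₀ c₀ d₀)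
    (hmono₁ : Monotone F₁) (hrc₁ : ∀ x : ℝ, ContinuousWithinAt F₁ (Set.Ici x) x)
    (hmono₀ : Monotone F₀) (hrc₀ : ∀ x : ℝ, ContinuousWithinAt F₀ (Set.Ici x) x)
    (t₁ t₀ q : ℕ → ℝ) (ht₁ : Tendsto t₁ atTop atTop) (ht₀ : Tendsto t₀ atTop atTop)
    (hq : ∀ n : ℕ, q n ∈ Set.Ioo (0 : ℝ) 1) (hq1 : Tendsto q atTop (nhds 1)) :
    Tendsto (fun n : ℕ =>
        (t₁ n * ((1 - F₁ (t₁ n)) / (1 - q n)) ^ (1 / α₁)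
          - t₀ n * ((1 - F₀ (t₀ n)) / (1 - q n)) ^ (1 / α₀)
          - (sInf {y : ℝ | q n ≤ F₁ y} - sInf {y : ℝ | q n ≤ F₀ y}))
        / max (sInf {y : ℝ | q n ≤ F₁ y}) (sInf {y : ℝ | q n ≤ F₀ y}))
      atTop (nhds 0) :=
  statement14_general F₁ F₀ α₁ ρ₁ c₁ d₁ α₀ ρ₀ c₀ d₀ hF₁ hF₀ hmono₁ hmono₀ t₁ t₀ q ht₁ ht₀ hq hq1
end
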